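/- For complex numbers q and L with 0 < |q| < 1 and L ≠ 0, and for a rational number r, define the modified sigma function σ[L, r] = q^{−⌊r⌋(⌊r⌋+1)/2} · (−L)^{⌊r⌋} · σ(L, q), where ⌊r⌋ ∈ ℤ is the floor of r and the powers are integer (possibly negative) powers of nonzero complex numbers. Then σ[qL, r+1] = σ[L, r]. -/

import Mathlib

/-!
Writing `(x; q)_∞ = ∏_{k ≥ 0} (1 - q^k x)`, the sigma product is
`σ(L) = (L; q)_∞ (q/L; q)_∞ / (q; q)_∞²`. Replacing `L` by `qL` moves the factor `1 - L` out of
the first symbol and the factor `1 - 1/L` into the second, so `σ(qL) = -L⁻¹ σ(L)`. The prefactor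
`q^{-T(n)} (-L)^n` with `T(n) = n(n+1)/2` compensates exactly, since `T(n+1) = T(n) + n + 1`.
-/

/-- The Weierstrass sigma product
`σ(L,q) = (1 − L) · ∏_{k≥1} (1 − q^k L)(1 − q^k L⁻¹)/(1 − q^k)²`. -/
noncomputable def weierstrassSigma (L q : ℂ) : ℂ :=
  (1 - L) * ∏' k : ℕ,
    ((1 - q ^ (k + 1) * L) * (1 - q ^ (k + 1) * L⁻¹)) / (1 - q ^ (k + 1)) ^ 2

/-- The modified sigma function
`σ[L,r] = q^{−⌊r⌋(⌊r⌋+1)/2} · (−L)^{⌊r⌋} · σ(L,q)`, with integer powers. -/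
noncomputable def weierstrassSigmaMod (q L : ℂ) (r : ℚ) : ℂ :=
  q ^ ((-(⌊r⌋ * (⌊r⌋ + 1))) / 2 : ℤ) * (-L) ^ (⌊r⌋ : ℤ) * weierstrassSigma L q

noncomputable def qPochhammer (x q : ℂ) : ℂ :=
  ∏' k : ℕ, (1 - q ^ k * x)

section

variable {q : ℂ}

lemma summable_norm_pow_mul (hq : ‖q‖ < 1) (x : ℂ) : Summable fun k : ℕ => ‖q ^ k * x‖ := by
  simpa only [norm_mul, norm_pow] using
    (summable_geometric_of_lt_one (norm_nonneg q) hq).mul_right ‖x‖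

lemma multipliable_one_sub_pow_mul (hq : ‖q‖ < 1) (x : ℂ) :
    Multipliable fun k : ℕ => 1 - q ^ k * x := by
  simpa only [sub_eq_add_neg, norm_neg] using
    multipliable_one_add_of_summable (f := fun k : ℕ => -(q ^ k * x)) (by
      simpa only [norm_neg] using summable_norm_pow_mul hq x)

lemma qPochhammer_eq_one_sub_mul (hq : ‖q‖ < 1) (x : ℂ) :
    qPochhammer x q = (1 - x) * qPochhammer (q * x) q := by
  have hshift : Multipliable fun k : ℕ => 1 - q ^ (k + 1) * x := by
    simpa only [pow_succ, mul_assoc] using multipliable_one_sub_pow_mul hq (q * x)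
  rw [qPochhammer, qPochhammer, tprod_eq_zero_mul' (f := fun k : ℕ => 1 - q ^ k * x) hshift]
  simp only [pow_zero, one_mul, pow_succ, mul_assoc]

lemma qPochhammer_self_ne_zero (hq : ‖q‖ < 1) : qPochhammer q q ≠ 0 := by
  refine tprod_one_add_ne_zero_of_summable (f := fun k : ℕ => -(q ^ k * q)) (fun k => ?_)
    (by simpa only [norm_neg] using summable_norm_pow_mul hq q)
  rw [← sub_eq_add_neg, sub_ne_zero, ← pow_succ]
  refine fun h => (pow_lt_one₀ (norm_nonneg q) hq k.succ_ne_zero).ne ?_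
  rw [← norm_pow, ← h, norm_one]

lemma weierstrassSigma_eq_qPochhammer (hq : ‖q‖ < 1) (L : ℂ) :
    weierstrassSigma L q =
      qPochhammer L q * qPochhammer (q * L⁻¹) q / qPochhammer q q ^ 2 := by
  have hmul := multipliable_one_sub_pow_mul hq
  rw [qPochhammer_eq_one_sub_mul hq L, weierstrassSigma, mul_assoc, mul_div_assoc]
  congr 1
  rw [qPochhammer, qPochhammer, qPochhammer, ← (hmul q).tprod_pow,
    ← (hmul (q * L)).tprod_mul (hmul (q * L⁻¹)),
    ← ((hmul (q * L)).mul (hmul (q * L⁻¹))).tprod_div₀ ((hmul q).pow 2) ?_]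
  · simp only [pow_succ, mul_assoc]
  · rw [(hmul q).tprod_pow]
    exact pow_ne_zero 2 (qPochhammer_self_ne_zero hq)

lemma weierstrassSigma_mul_left (hq0 : q ≠ 0) (hq : ‖q‖ < 1) {L : ℂ} (hL : L ≠ 0) :
    weierstrassSigma (q * L) q = -L⁻¹ * weierstrassSigma L q := by
  have hqL : q * (q * L)⁻¹ = L⁻¹ := by field_simp
  rw [weierstrassSigma_eq_qPochhammer hq, weierstrassSigma_eq_qPochhammer hq, hqL,
    qPochhammer_eq_one_sub_mul hq L, qPochhammer_eq_one_sub_mul hq L⁻¹]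
  field_simp
  ring

end

lemma neg_triangular_succ_div_two (n : ℤ) :
    -((n + 1) * (n + 1 + 1)) / 2 = -(n * (n + 1)) / 2 - (n + 1) := by
  obtain ⟨m, hm⟩ := Int.even_mul_succ_self n
  have : (n + 1) * (n + 1 + 1) = n * (n + 1) + 2 * (n + 1) := by ring
  omega

theorem stmt12 (q L : ℂ) (hq0 : 0 < ‖q‖) (hq1 : ‖q‖ < 1)
    (hL : L ≠ 0) (r : ℚ) :
    weierstrassSigmaMod q (q * L) (r + 1) = weierstrassSigmaMod q L r := by
  have hq : q ≠ 0 := norm_pos_iff.mp hq0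
  have hnL : -L ≠ 0 := neg_ne_zero.mpr hL
  rw [weierstrassSigmaMod, weierstrassSigmaMod, Int.floor_add_one,
    weierstrassSigma_mul_left hq hq1 hL, neg_triangular_succ_div_two, zpow_sub₀ hq,
    show -(q * L) = -L * q by ring, mul_zpow, zpow_add_one₀ hq, zpow_add_one₀ hnL]
  field_simp
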